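/- Let 𝔤 be the 4-dimensional real Lie algebra e(2) ⊕ ℝ with basis e₁, e₂, e₃, e₄ and nonzero brackets [e₁,e₃] = e₂, [e₂,e₃] = −e₁. The subspace B²(𝔤) of 2-coboundaries of 𝔤 has dimension 2, and the quotient vector space H²(𝔤) = Z²(𝔤)/B²(𝔤) (the 2-cohomology group of 𝔤) has dimension 2. -/

import Mathlib

noncomputable section

/-- The Lie bracket of the Lie algebra `e(2) ⊕ ℝ` on `ℝ⁴`, in the basis
`e₁ = e 0, e₂ = e 1, e₃ = e 2, e₄ = e 3` with nonzero brackets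
`[e₁,e₃] = e₂`, `[e₂,e₃] = -e₁`. -/
def bra (x y : Fin 4 → ℝ) : Fin 4 → ℝ :=
  ![-(x 1 * y 2 - x 2 * y 1), x 0 * y 2 - x 2 * y 0, 0, 0]

/-- `F` is an ℝ-bilinear form on `ℝ⁴`. -/
def IsBilin (F : (Fin 4 → ℝ) → (Fin 4 → ℝ) → ℝ) : Prop :=
  (∀ (c : ℝ) (x x' y : Fin 4 → ℝ), F (c • x + x') y = c * F x y + F x' y) ∧
  (∀ (c : ℝ) (x y y' : Fin 4 → ℝ), F x (c • y + y') = c * F x y + F x y')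

/-- The 2-cocycle identity for a bilinear form on `e(2) ⊕ ℝ`. -/
def IsCocycle (F : (Fin 4 → ℝ) → (Fin 4 → ℝ) → ℝ) : Prop :=
  ∀ x y z : Fin 4 → ℝ, F (bra x y) z + F (bra y z) x + F (bra z x) y = 0

/-- `Z²(𝔤)`: the subspace of alternating bilinear forms on `e(2) ⊕ ℝ` satisfying the
2-cocycle identity. -/
def Z2 : Submodule ℝ ((Fin 4 → ℝ) → (Fin 4 → ℝ) → ℝ) where
  carrier := {F | IsBilin F ∧ (∀ x : Fin 4 → ℝ, F x x = 0) ∧ IsCocycle F}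
  zero_mem' := by
    refine ⟨⟨fun c x x' y => by simp, fun c x y y' => by simp⟩, fun x => rfl,
      fun x y z => by simp⟩
  add_mem' := by
    rintro F G ⟨⟨hFl, hFr⟩, hFalt, hFc⟩ ⟨⟨hGl, hGr⟩, hGalt, hGc⟩
    refine ⟨⟨fun c x x' y => ?_, fun c x y y' => ?_⟩, fun x => ?_, fun x y z => ?_⟩
    · simp only [Pi.add_apply, hFl c x x' y, hGl c x x' y]; ring
    · simp only [Pi.add_apply, hFr c x y y', hGr c x y y']; ring
    · simp only [Pi.add_apply, hFalt x, hGalt x]; ring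
    · have h1 := hFc x y z; have h2 := hGc x y z
      simp only [Pi.add_apply]; linarith
  smul_mem' := by
    rintro c F ⟨⟨hFl, hFr⟩, hFalt, hFc⟩
    refine ⟨⟨fun d x x' y => ?_, fun d x y y' => ?_⟩, fun x => ?_, fun x y z => ?_⟩
    · simp only [Pi.smul_apply, smul_eq_mul, hFl d x x' y]; ring
    · simp only [Pi.smul_apply, smul_eq_mul, hFr d x y y']; ring
    · simp only [Pi.smul_apply, smul_eq_mul, hFalt x]; ring
    · have h1 := hFc x y z
      simp only [Pi.smul_apply, smul_eq_mul]; linear_combination c * h1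

/-- `B²(𝔤)`: the subspace of 2-coboundaries `F(x,y) = λ([x,y])`, `λ ∈ 𝔤*`. -/
def B2 : Submodule ℝ ((Fin 4 → ℝ) → (Fin 4 → ℝ) → ℝ) where
  carrier := {F | ∃ lam : (Fin 4 → ℝ) →ₗ[ℝ] ℝ, ∀ x y : Fin 4 → ℝ, F x y = lam (bra x y)}
  zero_mem' := ⟨0, by simp⟩
  add_mem' := by
    rintro F G ⟨l1, h1⟩ ⟨l2, h2⟩
    exact ⟨l1 + l2, fun x y => by simp [h1 x y, h2 x y]⟩
  smul_mem' := by
    rintro c F ⟨l, h⟩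
    exact ⟨c • l, fun x y => by simp [h x y]⟩


/-!
A bilinear alternating form `F` on `𝔤` is determined by its values on pairs of basis vectors, and
the cocycle identity at `(e₁, e₃, e₄)` and `(e₂, e₃, e₄)` kills `F(e₂, e₄)` and `F(e₁, e₄)`, so a
cocycle is determined by `F(e₁, e₂)`, `F(e₁, e₃)`, `F(e₂, e₃)`, `F(e₃, e₄)`. The coboundary of `λ`
takes the values `λ(e₂)`, `-λ(e₁)` at `(e₁, e₃)`, `(e₂, e₃)` and vanishes at `(e₁, e₂)`, `(e₃, e₄)`.
Hence `B² ≅ ℝ²` through the values at `(e₁, e₃)`, `(e₂, e₃)`, and `F ↦ (F(e₁, e₂), F(e₃, e₄))` maps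
`Z²` onto `ℝ²` with kernel `B²`.
-/

-- `𝐞 i` is the basis vector `e_{i+1}` of the informal statement.
local notation "𝐞" i:max => (Pi.single i 1 : Fin 4 → ℝ)

lemma bra_eq (x y : Fin 4 → ℝ) :
    bra x y = (x 2 * y 1 - x 1 * y 2) • 𝐞 0 + (x 0 * y 2 - x 2 * y 0) • 𝐞 1 := by
  funext j; fin_cases j <;> simp [bra]

lemma coboundary_apply (lam : (Fin 4 → ℝ) →ₗ[ℝ] ℝ) (x y : Fin 4 → ℝ) :
    lam (bra x y) =
      (x 2 * y 1 - x 1 * y 2) * lam (𝐞 0) + (x 0 * y 2 - x 2 * y 0) * lam (𝐞 1) := by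
  simp [bra_eq]

section Bilinear

variable {F : (Fin 4 → ℝ) → (Fin 4 → ℝ) → ℝ}

lemma IsBilin.apply_zero_left (hF : IsBilin F) (y : Fin 4 → ℝ) : F 0 y = 0 := by
  have h := hF.1 1 0 0 y
  simp only [one_smul, add_zero, one_mul] at h
  linarith

lemma IsBilin.apply_zero_right (hF : IsBilin F) (x : Fin 4 → ℝ) : F x 0 = 0 := by
  have h := hF.2 1 x 0 0
  simp only [one_smul, add_zero, one_mul] at h
  linarith

def IsBilin.toLinearMap₂ (hF : IsBilin F) : (Fin 4 → ℝ) →ₗ[ℝ] (Fin 4 → ℝ) →ₗ[ℝ] ℝ :=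
  LinearMap.mk₂ ℝ F (fun x x' y => by simpa using hF.1 1 x x' y)
    (fun c x y => by simpa [hF.apply_zero_left] using hF.1 c x 0 y)
    (fun x y y' => by simpa using hF.2 1 x y y')
    (fun c x y => by simpa [hF.apply_zero_right] using hF.2 c x y 0)

@[simp]
lemma IsBilin.toLinearMap₂_apply (hF : IsBilin F) (x y : Fin 4 → ℝ) :
    hF.toLinearMap₂ x y = F x y :=
  rfl

lemma IsBilin.apply_eq_sum (hF : IsBilin F) (x y : Fin 4 → ℝ) :
    F x y = ∑ i, ∑ j, x i * y j * F (𝐞 i) (𝐞 j) := by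
  rw [← hF.toLinearMap₂_apply, ← Matrix.toLinearMap₂'_toMatrix' (R := ℝ) hF.toLinearMap₂,
    Matrix.toLinearMap₂'_apply]
  simp only [LinearMap.toMatrix₂'_apply, hF.toLinearMap₂_apply, smul_eq_mul, mul_assoc]

lemma IsBilin.apply_swap (hF : IsBilin F) (halt : ∀ x, F x x = 0) (x y : Fin 4 → ℝ) :
    F y x = -F x y := by
  have h := halt (x + y)
  rw [← hF.toLinearMap₂_apply] at h
  simp only [map_add, LinearMap.add_apply, hF.toLinearMap₂_apply, halt] at h
  linarith

lemma IsBilin.apply_bra_left (hF : IsBilin F) (x y z : Fin 4 → ℝ) :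
    F (bra x y) z =
      (x 2 * y 1 - x 1 * y 2) * F (𝐞 0) z + (x 0 * y 2 - x 2 * y 0) * F (𝐞 1) z := by
  rw [bra_eq, ← hF.toLinearMap₂_apply]
  simp

lemma IsCocycle.apply_single_three_eq_zero (hF : IsBilin F) (hc : IsCocycle F) :
    F (𝐞 0) (𝐞 3) = 0 ∧ F (𝐞 1) (𝐞 3) = 0 := by
  have h023 := hc (𝐞 0) (𝐞 2) (𝐞 3)
  have h123 := hc (𝐞 1) (𝐞 2) (𝐞 3)
  exact ⟨by simpa [hF.apply_bra_left] using h123, by simpa [hF.apply_bra_left] using h023⟩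

lemma apply_eq_of_mem_Z2 (hF : F ∈ Z2) (x y : Fin 4 → ℝ) :
    F x y = F (𝐞 0) (𝐞 1) * (x 0 * y 1 - x 1 * y 0) +
      F (𝐞 0) (𝐞 2) * (x 0 * y 2 - x 2 * y 0) +
      F (𝐞 1) (𝐞 2) * (x 1 * y 2 - x 2 * y 1) +
      F (𝐞 2) (𝐞 3) * (x 2 * y 3 - x 3 * y 2) := by
  obtain ⟨hb, halt, hc⟩ := hF
  obtain ⟨h03, h13⟩ := hc.apply_single_three_eq_zero hb
  have swap (i j : Fin 4) := hb.apply_swap halt (𝐞 i) (𝐞 j)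
  rw [hb.apply_eq_sum]
  simp only [Fin.sum_univ_four, halt, swap 0 1, swap 0 2, swap 0 3, swap 1 2, swap 1 3, swap 2 3,
    h03, h13]
  ring

lemma mem_B2_of_mem_Z2 (hF : F ∈ Z2) (h01 : F (𝐞 0) (𝐞 1) = 0) (h23 : F (𝐞 2) (𝐞 3) = 0) :
    F ∈ B2 := by
  refine ⟨(-F (𝐞 1) (𝐞 2)) • LinearMap.proj 0 + F (𝐞 0) (𝐞 2) • LinearMap.proj 1, fun x y => ?_⟩
  rw [apply_eq_of_mem_Z2 hF, h01, h23]
  simp only [bra, LinearMap.add_apply, LinearMap.smul_apply, LinearMap.proj_apply, smul_eq_mul,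
    Matrix.cons_val_zero, Matrix.cons_val_one]
  ring

end Bilinear

def evalAt₂ {M R : Type*} [CommSemiring R] (u₁ v₁ u₂ v₂ : M) : (M → M → R) →ₗ[R] Fin 2 → R where
  toFun F := ![F u₁ v₁, F u₂ v₂]
  map_add' F G := by ext j; fin_cases j <;> rfl
  map_smul' c F := by ext j; fin_cases j <;> rfl

lemma evalAt₂_apply {M R : Type*} [CommSemiring R] (u₁ v₁ u₂ v₂ : M) (F : M → M → R) :
    evalAt₂ u₁ v₁ u₂ v₂ F = ![F u₁ v₁, F u₂ v₂] :=
  rfl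

lemma bijective_evalAt₂_B2 :
    Function.Bijective ((evalAt₂ (𝐞 0) (𝐞 2) (𝐞 1) (𝐞 2)).domRestrict B2) := by
  constructor
  · rw [← LinearMap.ker_eq_bot, LinearMap.ker_eq_bot']
    rintro ⟨F, lam, hlam⟩ h
    have h₁ : lam (𝐞 1) = 0 := by simpa [evalAt₂_apply, hlam, coboundary_apply] using congrFun h 0
    have h₀ : lam (𝐞 0) = 0 := by simpa [evalAt₂_apply, hlam, coboundary_apply] using congrFun h 1
    ext x y
    simp [hlam, coboundary_apply, h₀, h₁]
  · intro v
    let lam : (Fin 4 → ℝ) →ₗ[ℝ] ℝ := (-v 1) • LinearMap.proj 0 + v 0 • LinearMap.proj 1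
    refine ⟨⟨fun x y => lam (bra x y), lam, fun _ _ => rfl⟩, ?_⟩
    ext j; fin_cases j <;> simp [lam, evalAt₂_apply, coboundary_apply]

lemma surjective_evalAt₂_Z2 :
    Function.Surjective ((evalAt₂ (𝐞 0) (𝐞 1) (𝐞 2) (𝐞 3)).domRestrict Z2) := by
  intro v
  let F : (Fin 4 → ℝ) → (Fin 4 → ℝ) → ℝ := fun x y =>
    v 0 * (x 0 * y 1 - x 1 * y 0) + v 1 * (x 2 * y 3 - x 3 * y 2)
  have hF : F ∈ Z2 := by
    refine ⟨⟨fun c x x' y => ?_, fun c x y y' => ?_⟩, fun x => ?_, fun x y z => ?_⟩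
    all_goals simp only [F, bra, Pi.add_apply, Pi.smul_apply, smul_eq_mul, Matrix.cons_val]
    all_goals ring
  refine ⟨⟨F, hF⟩, ?_⟩
  ext j; fin_cases j <;> simp [F, evalAt₂_apply]

lemma ker_evalAt₂_Z2 :
    LinearMap.ker ((evalAt₂ (𝐞 0) (𝐞 1) (𝐞 2) (𝐞 3)).domRestrict Z2) =
      Submodule.comap Z2.subtype B2 := by
  ext ⟨F, hF⟩
  simp only [LinearMap.mem_ker, LinearMap.domRestrict_apply, evalAt₂_apply, Submodule.mem_comap,
    Submodule.subtype_apply]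
  constructor
  · intro h
    exact mem_B2_of_mem_Z2 hF (by simpa using congrFun h 0) (by simpa using congrFun h 1)
  · rintro ⟨lam, hlam⟩
    ext j; fin_cases j <;> simp [hlam, coboundary_apply]

/-- for `𝔤 = e(2) ⊕ ℝ` the space of 2-coboundaries `B²(𝔤)` is
2-dimensional, and the 2-cohomology group `H²(𝔤) = Z²(𝔤)/B²(𝔤)` is 2-dimensional. -/
theorem finrank_B2_and_H2 :
    Module.finrank ℝ B2 = 2 ∧
    Module.finrank ℝ (↥Z2 ⧸ Submodule.comap Z2.subtype B2) = 2 := by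
  constructor
  · rw [(LinearEquiv.ofBijective _ bijective_evalAt₂_B2).finrank_eq]
    simp
  · rw [← ker_evalAt₂_Z2, (LinearMap.quotKerEquivOfSurjective _ surjective_evalAt₂_Z2).finrank_eq]
    simp
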